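/- Every extreme point of U^k(R_min^max, C_min^max) is a 0-1 matrix. -/

import Mathlib

/-- The transportation polytope `U(R_min^max, C_min^max)`: n×m real matrices with entries
in `[0,1]`, row sums in `[r i, R i]` and column sums in `[c j, C j]`. -/
def transportU (n m : ℕ) (r R : Fin n → ℕ) (c C : Fin m → ℕ) :
    Set (Matrix (Fin n) (Fin m) ℝ) :=
  {A | (∀ i j, 0 ≤ A i j ∧ A i j ≤ 1) ∧
       (∀ i, (r i : ℝ) ≤ ∑ j, A i j ∧ ∑ j, A i j ≤ (R i : ℝ)) ∧
       (∀ j, (c j : ℝ) ≤ ∑ i, A i j ∧ ∑ i, A i j ≤ (C j : ℝ))}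

/-!
Suppose an extreme point `A` has a fractional entry. Border `A` by an extra row and column
holding its negated column and row sums, with its total in the corner: every line of the
bordered matrix sums to `0`, so no line contains exactly one non-integer entry. Hence every line
meeting the set `S` of non-integer positions meets it at least twice, and a dimension count
(`#S` is at least the number of lines met, while the line-sum map on `S` misses `(1, 0)`) gives
a nonzero matrix supported on `S` with all line sums zero. Restricted to the block of `A` it moves
only fractional entries and non-integral (hence strictly feasible) row and column sums, and keeps
the total, so `A ± t • D` stays in the polytope for small `t`, contradicting extremality.
-/

open Finset Filter Topology

theorem Finset.two_mul_card_image_le_card {α β : Type*} [DecidableEq β] {S : Finset α}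
    {f : α → β} (h : ∀ p ∈ S, ∃ q ∈ S, q ≠ p ∧ f q = f p) : 2 * #(S.image f) ≤ #S := by
  rw [card_eq_sum_card_image f S, mul_comm, ← smul_eq_mul]
  refine card_nsmul_le_sum _ _ _ fun b hb => ?_
  obtain ⟨p, hp, rfl⟩ := mem_image.1 hb
  obtain ⟨q, hq, hqp, hfq⟩ := h p hp
  exact one_lt_card.2 ⟨q, by simp [hq, hfq], p, by simp [hp], hqp⟩

theorem AddSubgroup.exists_ne_notMem_of_sum_mem {G κ : Type*} [AddCommGroup G] [Fintype κ]
    (H : AddSubgroup G) {f : κ → G} (hsum : ∑ j, f j ∈ H) {j₀ : κ} (hj₀ : f j₀ ∉ H) :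
    ∃ j ≠ j₀, f j ∉ H := by
  classical
  by_contra! h
  rw [← add_sum_erase _ f (mem_univ j₀)] at hsum
  exact hj₀ ((H.add_mem_cancel_right (H.sum_mem fun j hj => h j (ne_of_mem_erase hj))).1 hsum)

theorem LinearMap.ker_ne_bot_of_range_ne_top_of_finrank_le {K V W : Type*} [Field K]
    [AddCommGroup V] [Module K V] [FiniteDimensional K V] [AddCommGroup W] [Module K W]
    [FiniteDimensional K W] {f : V →ₗ[K] W} (hf : range f ≠ ⊤)
    (hdim : Module.finrank K W ≤ Module.finrank K V) : ker f ≠ ⊥ := by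
  rw [← ker_rangeRestrict]
  exact ker_ne_bot_of_finrank_lt ((Submodule.finrank_lt hf).trans_le hdim)

namespace Matrix

variable {ι κ : Type*} [Fintype ι] [Fintype κ]

theorem sum_image_fst_sum_eq_sum [DecidableEq ι] {M : Type*} [AddCommMonoid M]
    {S : Finset (ι × κ)} {f : ι × κ → M} (hf : ∀ p, f p ≠ 0 → p ∈ S) :
    ∑ i ∈ S.image Prod.fst, ∑ j, f (i, j) = ∑ p, f p := by
  rw [Fintype.sum_prod_type]
  refine sum_subset (subset_univ _) fun i _ hi => sum_eq_zero fun j _ => ?_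
  by_contra h
  exact hi (mem_image_of_mem Prod.fst (hf _ h))

theorem sum_image_snd_sum_eq_sum [DecidableEq κ] {M : Type*} [AddCommMonoid M]
    {S : Finset (ι × κ)} {f : ι × κ → M} (hf : ∀ p, f p ≠ 0 → p ∈ S) :
    ∑ j ∈ S.image Prod.snd, ∑ i, f (i, j) = ∑ p, f p := by
  rw [Fintype.sum_prod_type_right]
  refine sum_subset (subset_univ _) fun j _ hj => sum_eq_zero fun i _ => ?_
  by_contra h
  exact hj (mem_image_of_mem Prod.snd (hf _ h))

theorem exists_ne_zero_lineSums_eq_zero_of_support {S : Finset (ι × κ)} (hS : S.Nonempty)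
    (hrow : ∀ p ∈ S, ∃ q ∈ S, q ≠ p ∧ q.1 = p.1) (hcol : ∀ p ∈ S, ∃ q ∈ S, q ≠ p ∧ q.2 = p.2) :
    ∃ D : Matrix ι κ ℝ, D ≠ 0 ∧ (∀ i j, D i j ≠ 0 → (i, j) ∈ S) ∧
      (∀ i, ∑ j, D i j = 0) ∧ ∀ j, ∑ i, D i j = 0 := by
  classical
  set rows := S.image Prod.fst
  set cols := S.image Prod.snd
  let ext : (S → ℝ) →ₗ[ℝ] ι × κ → ℝ := Function.ExtendByZero.linearMap ℝ Subtype.val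
  have ext_supp (d : S → ℝ) (p : ι × κ) (hp : ext d p ≠ 0) : p ∈ S := by
    by_contra h
    exact hp (Function.extend_apply' _ _ _ fun ⟨q, hq⟩ => h (hq ▸ q.2))
  let Φ : (S → ℝ) →ₗ[ℝ] (rows → ℝ) × (cols → ℝ) :=
    .prod (.pi fun i => ∑ j, .proj ((i : ι), j) ∘ₗ ext)
      (.pi fun j => ∑ i, .proj (i, (j : κ)) ∘ₗ ext)
  have fst_Φ (d : S → ℝ) (i : rows) : (Φ d).1 i = ∑ j, ext d (i, j) := by simp [Φ]
  have snd_Φ (d : S → ℝ) (j : cols) : (Φ d).2 j = ∑ i, ext d (i, j) := by simp [Φ]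
  have hrange : LinearMap.range Φ ≠ ⊤ := by
    intro h
    obtain ⟨d, hd⟩ : ((fun _ => 1, 0) : (rows → ℝ) × (cols → ℝ)) ∈ LinearMap.range Φ :=
      h ▸ Submodule.mem_top
    have := (sum_image_fst_sum_eq_sum (ext_supp d)).trans
      (sum_image_snd_sum_eq_sum (ext_supp d)).symm
    rw [← sum_coe_sort rows, ← sum_coe_sort cols] at this
    simp only [← fst_Φ, ← snd_Φ, hd] at this
    simp at this
    exact (hS.image Prod.fst).ne_empty this
  have hdim : Module.finrank ℝ ((rows → ℝ) × (cols → ℝ)) ≤ Module.finrank ℝ (S → ℝ) := by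
    have h₁ : 2 * #rows ≤ #S := two_mul_card_image_le_card hrow
    have h₂ : 2 * #cols ≤ #S := two_mul_card_image_le_card hcol
    simp only [Module.finrank_prod, Module.finrank_fintype_fun_eq_card, Fintype.card_coe]
    omega
  obtain ⟨d, hdΦ, hd⟩ := Submodule.exists_mem_ne_zero_of_ne_bot
    (LinearMap.ker_ne_bot_of_range_ne_top_of_finrank_le hrange hdim)
  refine ⟨of fun i j => ext d (i, j), fun h => hd (funext fun p => ?_),
    fun i j => ext_supp d (i, j), fun i => ?_, fun j => ?_⟩
  · simpa [ext, Subtype.val_injective.extend_apply] using congr_fun₂ h p.1.1 p.1.2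
  · by_cases hi : i ∈ rows
    · simpa [fst_Φ] using congr_fun (congr_arg Prod.fst (LinearMap.mem_ker.1 hdΦ)) ⟨i, hi⟩
    · exact sum_eq_zero fun j _ => not_not.1 fun h => hi (mem_image_of_mem _ (ext_supp d _ h))
  · by_cases hj : j ∈ cols
    · simpa [snd_Φ] using congr_fun (congr_arg Prod.snd (LinearMap.mem_ker.1 hdΦ)) ⟨j, hj⟩
    · exact sum_eq_zero fun i _ => not_not.1 fun h => hj (mem_image_of_mem _ (ext_supp d _ h))

variable {G : Type*} [AddCommGroup G]

def borderNegSums (A : Matrix ι κ G) : Matrix (Option ι) (Option κ) G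
  | some i, some j => A i j
  | some i, none => -∑ j, A i j
  | none, some j => -∑ i, A i j
  | none, none => ∑ i, ∑ j, A i j

theorem sum_borderNegSums_row (A : Matrix ι κ G) (a : Option ι) :
    ∑ b, A.borderNegSums a b = 0 := by
  cases a <;> simp [borderNegSums, Fintype.sum_option, sum_comm (γ := κ)]

theorem sum_borderNegSums_col (A : Matrix ι κ G) (b : Option κ) :
    ∑ a, A.borderNegSums a b = 0 := by
  cases b <;> simp [borderNegSums, Fintype.sum_option]

theorem exists_perturbation_of_entry_notMem (H : AddSubgroup G) (A : Matrix ι κ G)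
    (htot : ∑ i, ∑ j, A i j ∈ H) {i₀ : ι} {j₀ : κ} (h₀ : A i₀ j₀ ∉ H) :
    ∃ D : Matrix ι κ ℝ, D ≠ 0 ∧ (∀ i j, D i j ≠ 0 → A i j ∉ H) ∧
      (∀ i, ∑ j, D i j ≠ 0 → ∑ j, A i j ∉ H) ∧ (∀ j, ∑ i, D i j ≠ 0 → ∑ i, A i j ∉ H) ∧
      ∑ i, ∑ j, D i j = 0 := by
  classical
  set S : Finset (Option ι × Option κ) := {p | A.borderNegSums p.1 p.2 ∉ H}
  have mem_S {a b} : (a, b) ∈ S ↔ A.borderNegSums a b ∉ H := by simp [S]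
  obtain ⟨E, hE, hES, hErow, hEcol⟩ := exists_ne_zero_lineSums_eq_zero_of_support
    (S := S) ⟨(some i₀, some j₀), mem_S.2 h₀⟩
    (fun p hp => by
      obtain ⟨j, hj, hjS⟩ := H.exists_ne_notMem_of_sum_mem (f := A.borderNegSums p.1)
        ((A.sum_borderNegSums_row p.1).symm ▸ H.zero_mem) (mem_S.1 hp)
      exact ⟨(p.1, j), mem_S.2 hjS, fun h => hj (congr_arg Prod.snd h), rfl⟩)
    (fun p hp => by
      obtain ⟨i, hi, hiS⟩ := H.exists_ne_notMem_of_sum_mem (f := (A.borderNegSums · p.2))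
        ((A.sum_borderNegSums_col p.2).symm ▸ H.zero_mem) (mem_S.1 hp)
      exact ⟨(i, p.2), mem_S.2 hiS, fun h => hi (congr_arg Prod.fst h), rfl⟩)
  have notMem_of_ne_zero {a b} (h : E a b ≠ 0) : A.borderNegSums a b ∉ H := mem_S.1 (hES a b h)
  have row_border (i : ι) : E (some i) none = -∑ j, E (some i) (some j) :=
    eq_neg_of_add_eq_zero_left (by simpa [Fintype.sum_option] using hErow (some i))
  have col_border (j : κ) : E none (some j) = -∑ i, E (some i) (some j) :=
    eq_neg_of_add_eq_zero_left (by simpa [Fintype.sum_option] using hEcol (some j))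
  have corner : E none none = 0 := by
    by_contra h
    exact notMem_of_ne_zero h htot
  refine ⟨fun i j => E (some i) (some j), fun h => hE ?_, fun i j h => notMem_of_ne_zero h,
    fun i h => ?_, fun j h => ?_, ?_⟩
  · have h' (i j) : E (some i) (some j) = 0 := congr_fun₂ h i j
    ext (_ | i) (_ | j) <;> simp [corner, row_border, col_border, h']
  · simpa [borderNegSums] using notMem_of_ne_zero (a := some i) (b := none)
      (by simpa [row_border] using h)
  · simpa [borderNegSums] using notMem_of_ne_zero (a := none) (b := some j)
      (by simpa [col_border] using h)
  · have := hEcol none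
    simp only [Fintype.sum_option, corner, row_border, zero_add, sum_neg_distrib] at this
    simpa using this

end Matrix

theorem eventually_mem_Icc_add_mul {a d lo hi : ℝ} (ha : lo ≤ a ∧ a ≤ hi)
    (hd : d ≠ 0 → a ≠ lo ∧ a ≠ hi) : ∀ᶠ t in 𝓝 (0 : ℝ), lo ≤ a + t * d ∧ a + t * d ≤ hi := by
  by_cases h : d = 0
  · simpa [h] using ha
  · have hIoo : Set.Ioo lo hi ∈ 𝓝 (a + 0 * d) := by
      rw [zero_mul, add_zero]
      exact Ioo_mem_nhds (lt_of_le_of_ne ha.1 (hd h).1.symm) (lt_of_le_of_ne ha.2 (hd h).2)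
    filter_upwards [(by fun_prop : Continuous fun t : ℝ => a + t * d).continuousAt hIoo]
      with t ht using ⟨ht.1.le, ht.2.le⟩

theorem eq_zero_of_mem_extremePoints_of_eventually_add_smul_mem {E : Type*} [AddCommGroup E]
    [Module ℝ E] {K : Set E} {x d : E} (hx : x ∈ K.extremePoints ℝ)
    (h : ∀ᶠ t in 𝓝 (0 : ℝ), x + t • d ∈ K) : d = 0 := by
  have h' : ∀ᶠ t in 𝓝[≠] (0 : ℝ), (x + t • d ∈ K ∧ x + (-t) • d ∈ K) ∧ t ≠ 0 :=
    ((h.and ((continuous_neg.tendsto' 0 0 neg_zero).eventually h)).filter_mono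
      nhdsWithin_le_nhds).and self_mem_nhdsWithin
  obtain ⟨t, ⟨hplus, hminus⟩, ht⟩ := h'.exists
  rw [neg_smul, ← sub_eq_add_neg] at hminus
  have := hx.2 hplus hminus (mem_openSegment_add_sub x (t • d))
  exact (smul_eq_zero.1 (add_eq_left.1 this)).resolve_left ht

theorem eventually_add_smul_mem_transportU {n m : ℕ} {r R : Fin n → ℕ} {c C : Fin m → ℕ}
    {A D : Matrix (Fin n) (Fin m) ℝ} (hA : A ∈ transportU n m r R c C)
    (hent : ∀ i j, D i j ≠ 0 → A i j ≠ 0 ∧ A i j ≠ 1)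
    (hrow : ∀ i, ∑ j, D i j ≠ 0 → ∑ j, A i j ≠ r i ∧ ∑ j, A i j ≠ R i)
    (hcol : ∀ j, ∑ i, D i j ≠ 0 → ∑ i, A i j ≠ c j ∧ ∑ i, A i j ≠ C j) :
    ∀ᶠ t in 𝓝 (0 : ℝ), A + t • D ∈ transportU n m r R c C := by
  obtain ⟨hbox, hrows, hcols⟩ := hA
  filter_upwards [
    eventually_all.2 fun i => eventually_all.2 fun j =>
      eventually_mem_Icc_add_mul (hbox i j) (hent i j),
    eventually_all.2 fun i => eventually_mem_Icc_add_mul (hrows i) (hrow i),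
    eventually_all.2 fun j => eventually_mem_Icc_add_mul (hcols j) (hcol j)]
    with t hent' hrow' hcol'
  refine ⟨fun i j => ?_, fun i => ?_, fun j => ?_⟩
  · simpa using hent' i j
  · simpa [sum_add_distrib, mul_sum] using hrow' i
  · simpa [sum_add_distrib, mul_sum] using hcol' j

theorem extremePoint_transportUk_zeroOne_general (n m k : ℕ)
    (r R : Fin n → ℕ) (c C : Fin m → ℕ)
    (A : Matrix (Fin n) (Fin m) ℝ)
    (hA : A ∈ Set.extremePoints ℝ
      {B ∈ transportU n m r R c C | ∑ i, ∑ j, B i j = (k : ℝ)}) :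
    ∀ i j, A i j = 0 ∨ A i j = 1 := by
  obtain ⟨hAU, htot⟩ := hA.1
  set Z := (Int.castAddHom ℝ).range
  have natCast_mem (a : ℕ) : (a : ℝ) ∈ Z := ⟨a, by simp⟩
  have one_mem : (1 : ℝ) ∈ Z := ⟨1, by simp⟩
  by_contra! ⟨i₀, j₀, h₀⟩
  have h₀Z : A i₀ j₀ ∉ Z := by
    rintro ⟨z, hz⟩
    simp only [Int.coe_castAddHom] at hz
    have : 0 ≤ z ∧ z ≤ 1 := by exact_mod_cast hz ▸ hAU.1 i₀ j₀
    obtain rfl | rfl : z = 0 ∨ z = 1 := by omega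
    all_goals simp [← hz] at h₀
  obtain ⟨D, hD, hent, hrow, hcol, htotD⟩ :=
    A.exists_perturbation_of_entry_notMem Z (htot ▸ natCast_mem k) h₀Z
  refine hD (eq_zero_of_mem_extremePoints_of_eventually_add_smul_mem hA ?_)
  filter_upwards [eventually_add_smul_mem_transportU hAU
    (fun i j h => ⟨fun e => hent i j h (e ▸ Z.zero_mem), fun e => hent i j h (e ▸ one_mem)⟩)
    (fun i h => ⟨fun e => hrow i h (e ▸ natCast_mem _), fun e => hrow i h (e ▸ natCast_mem _)⟩)
    (fun j h => ⟨fun e => hcol j h (e ▸ natCast_mem _), fun e => hcol j h (e ▸ natCast_mem _)⟩)]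
    with t ht
  exact ⟨ht, by simp [sum_add_distrib, ← mul_sum, htotD, htot]⟩

theorem extremePoint_transportUk_zeroOne (n m k : ℕ) (hn : 0 < n) (hm : 0 < m) (hk : 0 < k)
    (r R : Fin n → ℕ) (c C : Fin m → ℕ)
    (hrR : ∀ i, r i ≤ R i) (hcC : ∀ j, c j ≤ C j)
    (A : Matrix (Fin n) (Fin m) ℝ)
    (hA : A ∈ Set.extremePoints ℝ
      {B ∈ transportU n m r R c C | ∑ i, ∑ j, B i j = (k : ℝ)}) :
    ∀ i j, A i j = 0 ∨ A i j = 1 :=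
  extremePoint_transportUk_zeroOne_general n m k r R c C A hA
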